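/- arXiv:1408.0853 — 5 statements merged into one kernel-verified Lean document; each statement's English description precedes it below -/
import Mathlib

section
/- Let U be a nonempty set, let Q be a positive integer, and for each q = 1, …, Q let H_q be a subspace of the real vector space of functions U → ℝ (with pointwise operations), equipped with an inner product ⟨·,·⟩_{H_q} making it a real Hilbert space, and suppose κ_q : U × U → ℝ is a reproducing kernel for H_q (i.e., for every u ∈ U, κ_q(·,u) ∈ H_q and ⟨f, κ_q(·,u)⟩_{H_q} = f(u) for all f ∈ H_q). Let H⁺ = { Σ_{q=1}^Q f_q : f_q ∈ H_q } ⊆ (U → ℝ). Then there exists an inner product ⟨·,·⟩_{H⁺} on H⁺ such that: (i) for every f ∈ H⁺, the infimum inf{ Σ_{q=1}^Q ‖f_q‖²_{H_q} : f = Σ_{q=1}^Q f_q, f_q ∈ H_q } is attained and equals ⟨f,f⟩_{H⁺}; (ii) H⁺ is complete with respect to the induced norm; and (iii) κ := Σ_{q=1}^Q κ_q is a reproducing kernel for H⁺, i.e., κ(·,u) ∈ H⁺ and ⟨f, κ(·,u)⟩_{H⁺} = f(u) for all f ∈ H⁺ and u ∈ U. -/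
/-!
Realise `H⁺` as the image of `T : ⨁₂ H_q → (U → ℝ)`, `T g = ∑ q, g q`. Each evaluation `g ↦ (T g) u`
is the inner product with `(k_q u)_q`, so `ker T` is closed, and every `f ∈ range T` has a unique
preimage of least norm, the orthogonal projection onto `(ker T)ᗮ` of any preimage. Transporting the
inner product of `(ker T)ᗮ` along this bijection `range T ≃ (ker T)ᗮ` gives the minimum-norm inner
product; completeness is that of the closed subspace `(ker T)ᗮ`, and the reproducing property
follows because `T ((k_q u)_q) = ∑ q, κ_q(·, u)` and projecting onto `(ker T)ᗮ` is self-adjoint.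
-/

open scoped RealInnerProductSpace
open LinearMap (ker range)
open Filter Topology

section MinNormLift

variable {E F : Type*} [NormedAddCommGroup E] [InnerProductSpace ℝ E] [CompleteSpace E]
  [AddCommGroup F] [Module ℝ F]

-- Meaningful only on `range T`: elsewhere `Function.invFun` returns an arbitrary element.
noncomputable def minNormLift (T : E →ₗ[ℝ] F) (f : F) : E :=
  (ker T)ᗮ.starProjection (Function.invFun T f)

noncomputable def minNormInner (T : E →ₗ[ℝ] F) (f g : F) : ℝ :=
  ⟪minNormLift T f, minNormLift T g⟫

variable {T : E →ₗ[ℝ] F}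

theorem minNormLift_mem_orthogonal_ker (f : F) : minNormLift T f ∈ (ker T)ᗮ :=
  (ker T)ᗮ.starProjection_apply_mem _

theorem minNormLift_map (g : E) : minNormLift T (T g) = (ker T)ᗮ.starProjection g := by
  have hg : T (Function.invFun T (T g)) = T g := Function.invFun_eq ⟨g, rfl⟩
  rw [minNormLift, ← sub_eq_zero, ← map_sub, Submodule.starProjection_apply_eq_zero_iff]
  exact Submodule.le_orthogonal_orthogonal _ (by rw [LinearMap.mem_ker, map_sub, hg, sub_self])

theorem map_starProjection_orthogonal_ker (hK : IsClosed (ker T : Set E)) (g : E) :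
    T ((ker T)ᗮ.starProjection g) = T g := by
  have hg := (ker T)ᗮ.sub_starProjection_mem_orthogonal g
  rw [Submodule.orthogonal_orthogonal_eq_closure, hK.submodule_topologicalClosure_eq,
    LinearMap.mem_ker, map_sub, sub_eq_zero] at hg
  exact hg.symm

theorem map_minNormLift (hK : IsClosed (ker T : Set E)) {f : F} (hf : f ∈ range T) :
    T (minNormLift T f) = f := by
  obtain ⟨g, rfl⟩ := hf
  rw [minNormLift_map, map_starProjection_orthogonal_ker hK]

theorem norm_minNormLift_map_le (g : E) : ‖minNormLift T (T g)‖ ≤ ‖g‖ :=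
  minNormLift_map (T := T) g ▸ (ker T)ᗮ.norm_starProjection_apply_le g

theorem minNormLift_add {f g : F} (hf : f ∈ range T) (hg : g ∈ range T) :
    minNormLift T (f + g) = minNormLift T f + minNormLift T g := by
  obtain ⟨a, rfl⟩ := hf
  obtain ⟨b, rfl⟩ := hg
  rw [← map_add, minNormLift_map, minNormLift_map, minNormLift_map, map_add]

theorem minNormLift_sub {f g : F} (hf : f ∈ range T) (hg : g ∈ range T) :
    minNormLift T (f - g) = minNormLift T f - minNormLift T g := by
  obtain ⟨a, rfl⟩ := hf
  obtain ⟨b, rfl⟩ := hg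
  rw [← map_sub, minNormLift_map, minNormLift_map, minNormLift_map, map_sub]

theorem minNormLift_smul (c : ℝ) {f : F} (hf : f ∈ range T) :
    minNormLift T (c • f) = c • minNormLift T f := by
  obtain ⟨a, rfl⟩ := hf
  rw [← map_smul, minNormLift_map, minNormLift_map, map_smul]

theorem minNormInner_comm (f g : F) : minNormInner T f g = minNormInner T g f :=
  real_inner_comm _ _

theorem minNormInner_add_left {f g : F} (hf : f ∈ range T) (hg : g ∈ range T) (h : F) :
    minNormInner T (f + g) h = minNormInner T f h + minNormInner T g h := by
  rw [minNormInner, minNormLift_add hf hg, inner_add_left, minNormInner, minNormInner]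

theorem minNormInner_smul_left (c : ℝ) {f : F} (hf : f ∈ range T) (g : F) :
    minNormInner T (c • f) g = c * minNormInner T f g := by
  rw [minNormInner, minNormLift_smul c hf, real_inner_smul_left, minNormInner]

theorem minNormInner_self_eq_norm_sq (f : F) : minNormInner T f f = ‖minNormLift T f‖ ^ 2 :=
  real_inner_self_eq_norm_sq _

theorem minNormInner_self_nonneg (f : F) : 0 ≤ minNormInner T f f :=
  real_inner_self_nonneg

theorem eq_zero_of_minNormInner_self_eq_zero (hK : IsClosed (ker T : Set E)) {f : F}
    (hf : f ∈ range T) (h : minNormInner T f f = 0) : f = 0 := by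
  rw [← map_minNormLift hK hf, inner_self_eq_zero.mp h, map_zero]

theorem isLeast_minNormInner_self (hK : IsClosed (ker T : Set E)) {f : F} (hf : f ∈ range T) :
    IsLeast {s : ℝ | ∃ g : E, f = T g ∧ s = ‖g‖ ^ 2} (minNormInner T f f) := by
  refine ⟨⟨minNormLift T f, (map_minNormLift hK hf).symm, minNormInner_self_eq_norm_sq f⟩, ?_⟩
  rintro _ ⟨g, rfl, rfl⟩
  rw [minNormInner_self_eq_norm_sq]
  gcongr
  exact norm_minNormLift_map_le g

theorem exists_tendsto_minNormInner_of_cauchy (hK : IsClosed (ker T : Set E)) (s : ℕ → F)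
    (hs : ∀ n, s n ∈ range T)
    (hc : ∀ ε > (0 : ℝ), ∃ N, ∀ m ≥ N, ∀ n ≥ N, minNormInner T (s m - s n) (s m - s n) < ε) :
    ∃ f ∈ range T, Tendsto (fun n => minNormInner T (s n - f) (s n - f)) atTop (𝓝 0) := by
  have hcauchy : CauchySeq fun n => minNormLift T (s n) := by
    refine Metric.cauchySeq_iff.mpr fun ε hε => ?_
    obtain ⟨N, hN⟩ := hc (ε ^ 2) (by positivity)
    refine ⟨N, fun m hm n hn => ?_⟩
    have h := hN m hm n hn
    rw [minNormInner_self_eq_norm_sq, minNormLift_sub (hs m) (hs n)] at h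
    rw [dist_eq_norm]
    exact lt_of_pow_lt_pow_left₀ 2 hε.le h
  obtain ⟨g, hg⟩ := cauchySeq_tendsto_of_complete hcauchy
  have hg_mem : g ∈ (ker T)ᗮ := (ker T).isClosed_orthogonal.mem_of_tendsto hg
    (Eventually.of_forall fun n => minNormLift_mem_orthogonal_ker (s n))
  have hlift : minNormLift T (T g) = g := by
    rw [minNormLift_map, Submodule.starProjection_eq_self_iff.mpr hg_mem]
  refine ⟨T g, ⟨g, rfl⟩, ?_⟩
  simp_rw [minNormInner_self_eq_norm_sq, minNormLift_sub (hs _) ⟨g, rfl⟩, hlift]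
  simpa using (tendsto_iff_norm_sub_tendsto_zero.mp hg).pow 2

end MinNormLift

section Reproducing

variable {E U : Type*} [NormedAddCommGroup E] [InnerProductSpace ℝ E]
  {T : E →ₗ[ℝ] (U → ℝ)} {e : U → E}

theorem isClosed_ker_of_apply_eq_inner (he : ∀ g u, T g u = ⟪g, e u⟫) :
    IsClosed (ker T : Set E) := by
  have hT : Continuous T := continuous_pi fun u => by simp_rw [he]; fun_prop
  exact isClosed_singleton.preimage hT

theorem minNormInner_map_eq_apply [CompleteSpace E] (he : ∀ g u, T g u = ⟪g, e u⟫) {f : U → ℝ}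
    (hf : f ∈ range T) (u : U) : minNormInner T f (T (e u)) = f u := by
  have hself := Submodule.starProjection_eq_self_iff.mpr (minNormLift_mem_orthogonal_ker (T := T) f)
  rw [minNormInner, minNormLift_map, ← Submodule.inner_starProjection_left_eq_right, hself,
    ← he, map_minNormLift (isClosed_ker_of_apply_eq_inner he) hf]

end Reproducing

section SumSpace

variable {U : Type*} {Q : ℕ} {H : Fin Q → Type*}
  [∀ q, NormedAddCommGroup (H q)] [∀ q, InnerProductSpace ℝ (H q)]

noncomputable def sumMap (J : ∀ q, H q →ₗ[ℝ] (U → ℝ)) : PiLp 2 H →ₗ[ℝ] (U → ℝ) where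
  toFun g := ∑ q, J q (g q)
  map_add' x y := by simp only [PiLp.add_apply, map_add, Finset.sum_add_distrib]
  map_smul' c x := by simp only [PiLp.smul_apply, map_smul, Finset.smul_sum, RingHom.id_apply]

variable {J : ∀ q, H q →ₗ[ℝ] (U → ℝ)}

theorem sumMap_apply_eq_inner {k : ∀ q, U → H q} (hrep : ∀ q f u, ⟪f, k q u⟫ = J q f u)
    (g : PiLp 2 H) (u : U) : sumMap J g u = ⟪g, WithLp.toLp 2 fun q => k q u⟫ := by
  simp only [sumMap, LinearMap.coe_mk, AddHom.coe_mk, Finset.sum_apply, PiLp.inner_apply, hrep]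

theorem sumMap_toLp_eq_sum {κ : Fin Q → U → U → ℝ} {k : ∀ q, U → H q}
    (hk : ∀ q u, J q (k q u) = fun v => κ q v u) (u : U) :
    sumMap J (WithLp.toLp 2 fun q => k q u) = fun v => ∑ q, κ q v u := by
  funext v
  simp only [sumMap, LinearMap.coe_mk, AddHom.coe_mk, Finset.sum_apply, hk]

theorem setOf_eq_sum_eq_range_sumMap :
    {f | ∃ g : ∀ q, H q, f = ∑ q, J q (g q)} = (range (sumMap J) : Set (U → ℝ)) := by
  ext f
  exact ⟨fun ⟨g, hg⟩ => ⟨WithLp.toLp 2 g, hg.symm⟩, fun ⟨g, hg⟩ => ⟨g.ofLp, hg.symm⟩⟩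

theorem setOf_sum_norm_sq_eq (f : U → ℝ) :
    {s : ℝ | ∃ g : ∀ q, H q, f = ∑ q, J q (g q) ∧ s = ∑ q, ‖g q‖ ^ 2} =
      {s : ℝ | ∃ g : PiLp 2 H, f = sumMap J g ∧ s = ‖g‖ ^ 2} := by
  ext s
  constructor
  · rintro ⟨g, hf, hs⟩
    exact ⟨WithLp.toLp 2 g, hf, hs.trans (PiLp.norm_sq_eq_of_L2 H _).symm⟩
  · rintro ⟨g, hf, hs⟩
    exact ⟨g.ofLp, hf, hs.trans (PiLp.norm_sq_eq_of_L2 H g)⟩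

end SumSpace

theorem sum_space_is_rkhs_general
    (U : Type*) (Q : ℕ)
    (H : Fin Q → Type*)
    [∀ q, NormedAddCommGroup (H q)] [∀ q, InnerProductSpace ℝ (H q)]
    [∀ q, CompleteSpace (H q)]
    (J : ∀ q, H q →ₗ[ℝ] (U → ℝ))
    (κ : Fin Q → U → U → ℝ) (k : ∀ q, U → H q)
    (hk : ∀ q u, J q (k q u) = fun v => κ q v u)
    (hrep : ∀ (q : Fin Q) (f : H q) (u : U), ⟪f, k q u⟫ = J q f u)
    (Hplus : Set (U → ℝ))
    (hHplus : Hplus = {f | ∃ g : ∀ q, H q, f = ∑ q, J q (g q)}) :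
    ∃ ip : (U → ℝ) → (U → ℝ) → ℝ,
      -- `ip` is an inner product on `H⁺`:
      (∀ f ∈ Hplus, ∀ g ∈ Hplus, ip f g = ip g f) ∧
      (∀ f ∈ Hplus, ∀ g ∈ Hplus, ∀ h ∈ Hplus, ip (f + g) h = ip f h + ip g h) ∧
      (∀ (c : ℝ), ∀ f ∈ Hplus, ∀ g ∈ Hplus, ip (c • f) g = c * ip f g) ∧
      (∀ f ∈ Hplus, 0 ≤ ip f f) ∧
      (∀ f ∈ Hplus, ip f f = 0 → f = 0) ∧
      -- (i) the infimum over all decompositions is attained and equals `ip f f`: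
      (∀ f ∈ Hplus,
        IsLeast {s : ℝ | ∃ g : ∀ q, H q, f = ∑ q, J q (g q) ∧ s = ∑ q, ‖g q‖ ^ 2}
          (ip f f)) ∧
      -- (ii) `H⁺` is complete with respect to the induced norm:
      (∀ s : ℕ → (U → ℝ), (∀ n, s n ∈ Hplus) →
        (∀ ε > (0 : ℝ), ∃ N, ∀ m ≥ N, ∀ n ≥ N, ip (s m - s n) (s m - s n) < ε) →
        ∃ f ∈ Hplus,
          Filter.Tendsto (fun n => ip (s n - f) (s n - f)) Filter.atTop (nhds 0)) ∧
      -- (iii) `κ = ∑ q, κ q` is a reproducing kernel for `H⁺`: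
      (∀ u : U, (fun v => ∑ q, κ q v u) ∈ Hplus) ∧
      (∀ f ∈ Hplus, ∀ u : U, ip f (fun v => ∑ q, κ q v u) = f u) := by
  have he := sumMap_apply_eq_inner hrep
  have hK := isClosed_ker_of_apply_eq_inner he
  subst hHplus
  rw [setOf_eq_sum_eq_range_sumMap]
  refine ⟨minNormInner (sumMap J), fun f _ g _ => minNormInner_comm f g,
    fun f hf g hg h _ => minNormInner_add_left hf hg h,
    fun c f hf g _ => minNormInner_smul_left c hf g, fun f _ => minNormInner_self_nonneg f,
    fun f hf => eq_zero_of_minNormInner_self_eq_zero hK hf, fun f hf => ?_,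
    exists_tendsto_minNormInner_of_cauchy hK, fun u => ⟨_, sumMap_toLp_eq_sum hk u⟩,
    fun f hf u => ?_⟩
  · rw [setOf_sum_norm_sq_eq]
    exact isLeast_minNormInner_self hK hf
  · rw [← sumMap_toLp_eq_sum hk u]
    exact minNormInner_map_eq_apply he hf u

/-- Theorem 1 (Reproducing kernel of the sum space `H⁺`, Aronszajn):
the sum space of finitely many RKHSs over `U`, with the minimum-norm inner
product, is itself a RKHS with kernel the sum of the kernels. -/
theorem sum_space_is_rkhs
    (U : Type*) [Nonempty U] (Q : ℕ) (hQ : 0 < Q)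
    (H : Fin Q → Type*)
    [∀ q, NormedAddCommGroup (H q)] [∀ q, InnerProductSpace ℝ (H q)]
    [∀ q, CompleteSpace (H q)]
    (J : ∀ q, H q →ₗ[ℝ] (U → ℝ)) (hJ : ∀ q, Function.Injective (J q))
    (κ : Fin Q → U → U → ℝ) (k : ∀ q, U → H q)
    (hk : ∀ q u, J q (k q u) = fun v => κ q v u)
    (hrep : ∀ (q : Fin Q) (f : H q) (u : U), ⟪f, k q u⟫ = J q f u)
    (Hplus : Set (U → ℝ))
    (hHplus : Hplus = {f | ∃ g : ∀ q, H q, f = ∑ q, J q (g q)}) :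
    ∃ ip : (U → ℝ) → (U → ℝ) → ℝ,
      -- `ip` is an inner product on `H⁺`:
      (∀ f ∈ Hplus, ∀ g ∈ Hplus, ip f g = ip g f) ∧
      (∀ f ∈ Hplus, ∀ g ∈ Hplus, ∀ h ∈ Hplus, ip (f + g) h = ip f h + ip g h) ∧
      (∀ (c : ℝ), ∀ f ∈ Hplus, ∀ g ∈ Hplus, ip (c • f) g = c * ip f g) ∧
      (∀ f ∈ Hplus, 0 ≤ ip f f) ∧
      (∀ f ∈ Hplus, ip f f = 0 → f = 0) ∧
      -- (i) the infimum over all decompositions is attained and equals `ip f f`: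
      (∀ f ∈ Hplus,
        IsLeast {s : ℝ | ∃ g : ∀ q, H q, f = ∑ q, J q (g q) ∧ s = ∑ q, ‖g q‖ ^ 2}
          (ip f f)) ∧
      -- (ii) `H⁺` is complete with respect to the induced norm:
      (∀ s : ℕ → (U → ℝ), (∀ n, s n ∈ Hplus) →
        (∀ ε > (0 : ℝ), ∃ N, ∀ m ≥ N, ∀ n ≥ N, ip (s m - s n) (s m - s n) < ε) →
        ∃ f ∈ Hplus,
          Filter.Tendsto (fun n => ip (s n - f) (s n - f)) Filter.atTop (nhds 0)) ∧
      -- (iii) `κ = ∑ q, κ q` is a reproducing kernel for `H⁺`: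
      (∀ u : U, (fun v => ∑ q, κ q v u) ∈ Hplus) ∧
      (∀ f ∈ Hplus, ∀ u : U, ip f (fun v => ∑ q, κ q v u) = f u) :=
  sum_space_is_rkhs_general U Q H J κ k hk hrep Hplus hHplus
end

section
/- Let L be a positive integer, let U ⊆ ℝ^L be a set with nonempty interior, and let σ > 0. Suppose p : ℝ^L → ℝ is a polynomial function, n is a positive integer, u_1, …, u_n ∈ U, and α_1, …, α_n ∈ ℝ are such that Σ_{j=1}^n α_j exp(−‖x − u_j‖² / (2σ²)) = p(x) for every x ∈ U. Then p(x) = 0 for every x ∈ U; moreover, if the centers u_1, …, u_n are pairwise distinct, then α_j = 0 for every j. -/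
/-!
Both sides of the identity are real-analytic on `ℝ^L`, so by the identity theorem they agree
everywhere once they agree on an open set. The Gaussian combination tends to `0` at infinity,
so along any line the polynomial is a one-variable polynomial with limit `0`, hence zero.
For the coefficients, factor out `exp (-‖x‖² / 2σ²)`: what is left is a combination of the
characters `x ↦ exp ⟪x, u j / σ²⟫` of `(ℝ^L, +)`, which are distinct for distinct centres and
therefore linearly independent by Dedekind's lemma.
-/

open Real Filter Set Bornology
open scoped InnerProductSpace Topology

section ExpInner

variable {E : Type*} [NormedAddCommGroup E] [InnerProductSpace ℝ E]

noncomputable def expInnerChar (v : E) : Multiplicative E →* ℝ where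
  toFun x := exp ⟪x.toAdd, v⟫_ℝ
  map_one' := by simp
  map_mul' a b := by simp [inner_add_left, exp_add]

theorem expInnerChar_injective : Function.Injective (expInnerChar (E := E)) := by
  intro v w hvw
  have h := exp_injective (DFunLike.congr_fun hvw (.ofAdd (v - w)))
  simp only [toAdd_ofAdd] at h
  rw [← sub_eq_zero, ← inner_self_eq_zero (𝕜 := ℝ), inner_sub_right, h, sub_self]

theorem linearIndependent_exp_inner {ι : Type*} {u : ι → E} (hu : Function.Injective u) :
    LinearIndependent ℝ (fun j (x : E) => exp ⟪x, u j⟫_ℝ) :=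
  (linearIndependent_monoidHom (Multiplicative E) ℝ).comp _ (expInnerChar_injective.comp hu)

end ExpInner

theorem tendsto_add_smul_atTop_cobounded {E : Type*} [NormedAddCommGroup E] [NormedSpace ℝ E]
    (x : E) {v : E} (hv : v ≠ 0) : Tendsto (fun t : ℝ => x + t • v) atTop (cobounded E) := by
  refine (tendsto_const_add_cobounded x).comp (tendsto_norm_atTop_iff_cobounded.1 ?_)
  simp_rw [norm_smul]
  exact tendsto_norm_atTop_atTop.atTop_mul_const (norm_pos_iff.2 hv)

section GaussianSum

variable {E ι : Type*} [NormedAddCommGroup E] [InnerProductSpace ℝ E] [Fintype ι]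

noncomputable def gaussianSum (σ : ℝ) (u : ι → E) (α : ι → ℝ) (x : E) : ℝ :=
  ∑ j, α j * exp (-‖x - u j‖ ^ 2 / (2 * σ ^ 2))

@[fun_prop]
theorem AnalyticAt.norm_sq {F : Type*} [NormedAddCommGroup F] [NormedSpace ℝ F] {f : F → E}
    {x : F} (hf : AnalyticAt ℝ f x) : AnalyticAt ℝ (fun y => ‖f y‖ ^ 2) x := by
  simp_rw [← real_inner_self_eq_norm_sq]
  have hinner : AnalyticAt ℝ (fun p : E × E => ⟪p.1, p.2⟫_ℝ) (f x, f x) :=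
    (innerSL ℝ).analyticAt_bilinear _
  exact hinner.comp (f := fun y => (f y, f y)) (hf.prod hf)

theorem analyticOnNhd_gaussianSum (σ : ℝ) (u : ι → E) (α : ι → ℝ) :
    AnalyticOnNhd ℝ (gaussianSum σ u α) univ := by
  intro x _
  unfold gaussianSum
  fun_prop

omit [InnerProductSpace ℝ E] in
theorem tendsto_gaussianSum_cobounded {σ : ℝ} (hσ : σ ≠ 0) (u : ι → E) (α : ι → ℝ) :
    Tendsto (gaussianSum σ u α) (cobounded E) (𝓝 0) := by
  rw [show (0 : ℝ) = ∑ j : ι, α j * 0 by simp]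
  refine tendsto_finsetSum _ fun j _ => tendsto_const_nhds.mul ?_
  have hnorm : Tendsto (fun x : E => ‖x - u j‖ ^ 2) (cobounded E) atTop :=
    (tendsto_pow_atTop two_ne_zero).comp <|
      tendsto_norm_cobounded_atTop.comp (tendsto_sub_const_cobounded (u j))
  exact tendsto_exp_atBot.comp <|
    (tendsto_neg_atTop_atBot.comp hnorm).atBot_div_const (by positivity)

theorem gaussianSum_eq_exp_mul_sum_exp_inner {σ : ℝ} (hσ : σ ≠ 0) (u : ι → E) (α : ι → ℝ)
    (x : E) :
    gaussianSum σ u α x = exp (-‖x‖ ^ 2 / (2 * σ ^ 2)) *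
      ∑ j, α j * exp (-‖u j‖ ^ 2 / (2 * σ ^ 2)) * exp ⟪x, (σ ^ 2)⁻¹ • u j⟫_ℝ := by
  rw [gaussianSum, Finset.mul_sum]
  refine Finset.sum_congr rfl fun j _ => ?_
  have hexponent : -‖x - u j‖ ^ 2 / (2 * σ ^ 2) =
      -‖x‖ ^ 2 / (2 * σ ^ 2) + -‖u j‖ ^ 2 / (2 * σ ^ 2) + ⟪x, (σ ^ 2)⁻¹ • u j⟫_ℝ := by
    rw [inner_smul_right, norm_sub_sq_real]
    field_simp
    ring
  rw [hexponent, exp_add, exp_add]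
  ring

theorem eq_zero_of_gaussianSum_eq_zero {σ : ℝ} (hσ : σ ≠ 0) {u : ι → E}
    (hu : Function.Injective u) {α : ι → ℝ} (h : ∀ x, gaussianSum σ u α x = 0) (j : ι) :
    α j = 0 := by
  have hscaled : Function.Injective fun j => (σ ^ 2)⁻¹ • u j :=
    (smul_right_injective E (inv_ne_zero (pow_ne_zero 2 hσ))).comp hu
  have hβ : ∀ j, α j * exp (-‖u j‖ ^ 2 / (2 * σ ^ 2)) = 0 := by
    refine Fintype.linearIndependent_iff.1 (linearIndependent_exp_inner hscaled) _ ?_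
    funext x
    have hx := h x
    rw [gaussianSum_eq_exp_mul_sum_exp_inner hσ] at hx
    simpa [Finset.sum_apply, (exp_pos _).ne'] using hx
  exact (mul_eq_zero.1 (hβ j)).resolve_right (exp_ne_zero _)

end GaussianSum

theorem MvPolynomial.polynomial_eval_aeval {R σ : Type*} [CommSemiring R] (p : MvPolynomial σ R)
    (g : σ → Polynomial R) (t : R) : (aeval g p).eval t = eval (fun i => (g i).eval t) p := by
  induction p using MvPolynomial.induction_on <;> simp_all

theorem MvPolynomial.eval_eq_zero_of_tendsto_line {σ : Type*} (p : MvPolynomial σ ℝ)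
    (x v : σ → ℝ) (h : Tendsto (fun t : ℝ => eval (x + t • v) p) atTop (𝓝 0)) :
    eval x p = 0 := by
  set q : Polynomial ℝ :=
    aeval (fun i => Polynomial.C (x i) + Polynomial.X * Polynomial.C (v i)) p
  have hq : ∀ t, q.eval t = eval (x + t • v) p := by
    intro t
    rw [polynomial_eval_aeval]
    congr 2 with i
    simp [mul_comm t]
  have hq0 : q = 0 := by
    rw [← Polynomial.leadingCoeff_eq_zero]
    exact ((Polynomial.tendsto_nhds_iff q).1 (by simpa only [hq] using h)).1
  simpa [hq0] using (hq 0).symm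

theorem gaussian_combination_eq_polynomial_implies_zero_general
    (L : ℕ) (hL : 0 < L)
    (U : Set (EuclideanSpace ℝ (Fin L))) (hU : (interior U).Nonempty)
    (σ : ℝ) (hσ : 0 < σ)
    (p : MvPolynomial (Fin L) ℝ)
    (n : ℕ)
    (u : Fin n → EuclideanSpace ℝ (Fin L))
    (α : Fin n → ℝ)
    (h : ∀ x ∈ U,
      ∑ j, α j * Real.exp (-‖x - u j‖ ^ 2 / (2 * σ ^ 2)) =
        MvPolynomial.eval (fun i => x i) p) :
    (∀ x ∈ U, MvPolynomial.eval (fun i => x i) p = 0) ∧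
    (Function.Injective u → ∀ j, α j = 0) := by
  have hfp : gaussianSum σ u α = fun x => MvPolynomial.eval (fun i => x i) p := by
    have hp_analytic := AnalyticOnNhd.eval_continuousLinearMap'
      (fun i => EuclideanSpace.proj (𝕜 := ℝ) (ι := Fin L) i) p
    obtain ⟨z, hz⟩ := hU
    refine (analyticOnNhd_gaussianSum σ u α).eq_of_eventuallyEq hp_analytic (z₀ := z) ?_
    filter_upwards [isOpen_interior.mem_nhds hz] with x hx using h x (interior_subset hx)
  have hp : ∀ x : EuclideanSpace ℝ (Fin L), MvPolynomial.eval (fun i => x i) p = 0 := by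
    intro x
    have : Nonempty (Fin L) := ⟨⟨0, hL⟩⟩
    obtain ⟨v, hv⟩ := exists_ne (0 : EuclideanSpace ℝ (Fin L))
    refine MvPolynomial.eval_eq_zero_of_tendsto_line p _ (fun i => v i) ?_
    have hlim := (tendsto_gaussianSum_cobounded hσ.ne' u α).comp
      (tendsto_add_smul_atTop_cobounded x hv)
    rwa [hfp] at hlim
  exact ⟨fun x _ => hp x, fun hu => eq_zero_of_gaussianSum_eq_zero hσ.ne' hu
    fun x => (congrFun hfp x).trans (hp x)⟩

/-- Minh's theorem (finite-linear-combination form): on a set `U ⊆ ℝ^L` with nonempty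
interior, a finite linear combination of Gaussian bumps that coincides with a polynomial
on `U` must vanish on `U`; if moreover the centers are pairwise distinct, all
coefficients vanish. -/
theorem gaussian_combination_eq_polynomial_implies_zero
    (L : ℕ) (hL : 0 < L)
    (U : Set (EuclideanSpace ℝ (Fin L))) (hU : (interior U).Nonempty)
    (σ : ℝ) (hσ : 0 < σ)
    (p : MvPolynomial (Fin L) ℝ)
    (n : ℕ) (hn : 0 < n)
    (u : Fin n → EuclideanSpace ℝ (Fin L)) (hu : ∀ j, u j ∈ U)
    (α : Fin n → ℝ)
    (h : ∀ x ∈ U,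
      ∑ j, α j * Real.exp (-‖x - u j‖ ^ 2 / (2 * σ ^ 2)) =
        MvPolynomial.eval (fun i => x i) p) :
    (∀ x ∈ U, MvPolynomial.eval (fun i => x i) p = 0) ∧
    (Function.Injective u → ∀ j, α j = 0) :=
  gaussian_combination_eq_polynomial_implies_zero_general L hL U hU σ hσ p n u α h
end

section
/- Let H be a real Hilbert space, M ⊆ H a closed subspace, φ₀ ∈ H, and set V := M + φ₀ = { m + φ₀ : m ∈ M } (a closed affine set). Let k ∈ H and d ∈ ℝ, and assume P_M(k) ≠ 0, where P_M is the orthogonal projection onto M. Define Π_V := { f ∈ V : ⟨f, k⟩ = d }. Then Π_V is a nonempty closed convex subset of H, and for every f ∈ V the orthogonal projection of f onto Π_V is given by P_{Π_V}(f) = f + ((d − ⟨f, k⟩) / ‖P_M(k)‖²) · P_M(k). -/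
open scoped RealInnerProductSpace

/-!
Write `p = P_M k`. Since `k - p ⟂ M`, the functional `⟪·, k⟫` agrees with `⟪·, p⟫` on `M`, so
`Π_V` is the level set `⟪·, p⟫ = const` inside `V`, and moving `f ∈ V` along `p` by the right
amount, `P f = f + c p`, lands in `Π_V`. For `g ∈ Π_V` the step `f - P f` is parallel to `p` while `P f - g ∈ M` is
orthogonal to `p`, so Pythagoras gives `‖f - g‖² = ‖f - P f‖² + ‖P f - g‖²`.
-/

section NearestPoint

variable {E : Type*} [NormedAddCommGroup E] [InnerProductSpace ℝ E] {f p g : E}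

theorem norm_sub_sq_eq_of_inner_sub_eq_zero (h : ⟪f - p, p - g⟫ = 0) :
    ‖f - g‖ ^ 2 = ‖f - p‖ ^ 2 + ‖p - g‖ ^ 2 := by
  simpa only [sq, sub_add_sub_cancel] using norm_add_sq_eq_norm_sq_add_norm_sq_real h

theorem norm_sub_le_norm_sub_of_inner_sub_eq_zero (h : ⟪f - p, p - g⟫ = 0) :
    ‖f - p‖ ≤ ‖f - g‖ := by
  have := norm_sub_sq_eq_of_inner_sub_eq_zero h
  exact le_of_sq_le_sq (by nlinarith [sq_nonneg ‖p - g‖]) (norm_nonneg _)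

theorem eq_of_inner_sub_eq_zero_of_norm_sub_le (h : ⟪f - p, p - g⟫ = 0)
    (hle : ‖f - g‖ ≤ ‖f - p‖) : g = p := by
  have hsq := norm_sub_sq_eq_of_inner_sub_eq_zero h
  have : ‖p - g‖ ^ 2 ≤ 0 := by nlinarith [norm_nonneg (f - g)]
  have : ‖p - g‖ = 0 := by nlinarith [norm_nonneg (p - g)]
  exact (sub_eq_zero.mp (norm_eq_zero.mp this)).symm

end NearestPoint

namespace Submodule

variable {E : Type*} [NormedAddCommGroup E] [InnerProductSpace ℝ E] (K : Submodule ℝ E)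

theorem setOf_exists_mem_eq_add_eq_mk' (φ₀ : E) :
    {f : E | ∃ m ∈ K, f = m + φ₀} = (AffineSubspace.mk' φ₀ K : Set E) := by
  ext f
  simp only [Set.mem_ofPred_eq, SetLike.mem_coe, AffineSubspace.mem_mk', vsub_eq_sub]
  exact ⟨fun ⟨m, hm, hf⟩ => by rwa [hf, add_sub_cancel_right],
    fun hf => ⟨f - φ₀, hf, (sub_add_cancel f φ₀).symm⟩⟩

variable [K.HasOrthogonalProjection]

theorem inner_starProjection_eq_of_mem {m : E} (hm : m ∈ K) (k : E) :
    ⟪m, K.starProjection k⟫ = ⟪m, k⟫ := by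
  rw [← inner_starProjection_left_eq_right, starProjection_eq_self_iff.mpr hm]

noncomputable def hyperplaneProjection (k : E) (d : ℝ) (f : E) : E :=
  f + ((d - ⟪f, k⟫) / ‖K.starProjection k‖ ^ 2) • K.starProjection k

variable {K} {k : E} {d : ℝ} {φ₀ f g : E}

theorem hyperplaneProjection_sub_self_mem : K.hyperplaneProjection k d f - f ∈ K := by
  rw [hyperplaneProjection, add_sub_cancel_left]
  exact K.smul_mem _ (K.starProjection_apply_mem k)

theorem hyperplaneProjection_mem_mk' (hf : f ∈ AffineSubspace.mk' φ₀ K) :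
    K.hyperplaneProjection k d f ∈ AffineSubspace.mk' φ₀ K := by
  rw [AffineSubspace.mem_mk', vsub_eq_sub] at hf ⊢
  rw [← sub_add_sub_cancel _ f]
  exact K.add_mem hyperplaneProjection_sub_self_mem hf

theorem inner_hyperplaneProjection (hPk : K.starProjection k ≠ 0) :
    ⟪K.hyperplaneProjection k d f, k⟫ = d := by
  have hpk : ⟪K.starProjection k, k⟫ = ‖K.starProjection k‖ ^ 2 := by
    rw [← K.inner_starProjection_eq_of_mem (K.starProjection_apply_mem k),
      real_inner_self_eq_norm_sq]
  have hp : ‖K.starProjection k‖ ^ 2 ≠ 0 := by positivity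
  rw [hyperplaneProjection, inner_add_left, real_inner_smul_left, hpk, div_mul_cancel₀ _ hp]
  ring

theorem inner_sub_hyperplaneProjection_eq_zero (hPk : K.starProjection k ≠ 0)
    (hf : f ∈ AffineSubspace.mk' φ₀ K) (hg : g ∈ AffineSubspace.mk' φ₀ K) (hgk : ⟪g, k⟫ = d) :
    ⟪f - K.hyperplaneProjection k d f, K.hyperplaneProjection k d f - g⟫ = 0 := by
  have hmem : K.hyperplaneProjection k d f - g ∈ K := by
    have hPf := hyperplaneProjection_mem_mk' (k := k) (d := d) hf
    rw [AffineSubspace.mem_mk', vsub_eq_sub] at hPf hg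
    simpa only [sub_sub_sub_cancel_right] using K.sub_mem hPf hg
  have hk : ⟪K.hyperplaneProjection k d f - g, k⟫ = 0 := by
    rw [inner_sub_left, inner_hyperplaneProjection hPk, hgk, sub_self]
  have hstep : f - K.hyperplaneProjection k d f =
      -(((d - ⟪f, k⟫) / ‖K.starProjection k‖ ^ 2) • K.starProjection k) := by
    rw [← neg_sub, hyperplaneProjection, add_sub_cancel_left]
  rw [hstep, inner_neg_left, real_inner_smul_left, real_inner_comm _ (K.starProjection k),
    K.inner_starProjection_eq_of_mem hmem, hk, mul_zero, neg_zero]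

end Submodule

theorem projection_onto_hyperplane_in_affine_set_general
    (H : Type*) [NormedAddCommGroup H] [InnerProductSpace ℝ H]
    (M : Submodule ℝ H) [CompleteSpace M]
    (φ₀ : H)
    (V : Set H) (hV : V = {f : H | ∃ m ∈ M, f = m + φ₀})
    (k : H) (d : ℝ)
    (hPk : (Submodule.orthogonalProjection M k : H) ≠ 0)
    (PiV : Set H) (hPiV : PiV = {f ∈ V | ⟪f, k⟫ = d}) :
    PiV.Nonempty ∧ IsClosed PiV ∧ Convex ℝ PiV ∧
    ∀ f ∈ V,
      (f + ((d - ⟪f, k⟫) / ‖(Submodule.orthogonalProjection M k : H)‖ ^ 2) •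
          (Submodule.orthogonalProjection M k : H)) ∈ PiV ∧
      (∀ g ∈ PiV,
        ‖f - (f + ((d - ⟪f, k⟫) / ‖(Submodule.orthogonalProjection M k : H)‖ ^ 2) •
            (Submodule.orthogonalProjection M k : H))‖ ≤ ‖f - g‖) ∧
      (∀ g ∈ PiV, (∀ h ∈ PiV, ‖f - g‖ ≤ ‖f - h‖) →
        g = f + ((d - ⟪f, k⟫) / ‖(Submodule.orthogonalProjection M k : H)‖ ^ 2) •
            (Submodule.orthogonalProjection M k : H)) := by
  subst hV hPiV
  rw [M.setOf_exists_mem_eq_add_eq_mk' φ₀]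
  have hp : M.starProjection k ≠ 0 := hPk
  have hV_closed : IsClosed (AffineSubspace.mk' φ₀ M : Set H) := by
    rw [← AffineSubspace.isClosed_direction_iff, AffineSubspace.direction_mk']
    exact (completeSpace_coe_iff_isComplete.mp ‹_›).isClosed
  have hproj_mem {f : H} (hf : f ∈ AffineSubspace.mk' φ₀ M) :
      M.hyperplaneProjection k d f ∈ {g ∈ (AffineSubspace.mk' φ₀ M : Set H) | ⟪g, k⟫ = d} :=
    ⟨Submodule.hyperplaneProjection_mem_mk' hf, Submodule.inner_hyperplaneProjection hp⟩
  refine ⟨⟨_, hproj_mem (AffineSubspace.self_mem_mk' φ₀ M)⟩,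
    hV_closed.inter (isClosed_eq (continuous_id.inner continuous_const) continuous_const),
    (AffineSubspace.convex _).inter (convex_hyperplane ((innerₗ H).flip k).isLinear d),
    fun f hf => ⟨hproj_mem hf, fun g hg => ?_, fun g hg hmin => ?_⟩⟩
  · exact norm_sub_le_norm_sub_of_inner_sub_eq_zero
      (Submodule.inner_sub_hyperplaneProjection_eq_zero hp hf hg.1 hg.2)
  · exact eq_of_inner_sub_eq_zero_of_norm_sub_le
      (Submodule.inner_sub_hyperplaneProjection_eq_zero hp hf hg.1 hg.2) (hmin _ (hproj_mem hf))

/-- Proposition 1 (projection onto a hyperplane within a translated subspace):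
for the affine set `V = M + φ₀` and the hyperplane `Π_V = {f ∈ V : ⟪f,k⟫ = d}` with
`P_M k ≠ 0`, `Π_V` is nonempty closed convex and for every `f ∈ V` the metric
projection of `f` onto `Π_V` is `f + ((d - ⟪f,k⟫)/‖P_M k‖²) • P_M k`. -/
theorem projection_onto_hyperplane_in_affine_set
    (H : Type*) [NormedAddCommGroup H] [InnerProductSpace ℝ H] [CompleteSpace H]
    (M : Submodule ℝ H) (hM : IsClosed (M : Set H)) [CompleteSpace M]
    (φ₀ : H)
    (V : Set H) (hV : V = {f : H | ∃ m ∈ M, f = m + φ₀})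
    (k : H) (d : ℝ)
    (hPk : (Submodule.orthogonalProjection M k : H) ≠ 0)
    (PiV : Set H) (hPiV : PiV = {f ∈ V | ⟪f, k⟫ = d}) :
    PiV.Nonempty ∧ IsClosed PiV ∧ Convex ℝ PiV ∧
    ∀ f ∈ V,
      (f + ((d - ⟪f, k⟫) / ‖(Submodule.orthogonalProjection M k : H)‖ ^ 2) •
          (Submodule.orthogonalProjection M k : H)) ∈ PiV ∧
      (∀ g ∈ PiV,
        ‖f - (f + ((d - ⟪f, k⟫) / ‖(Submodule.orthogonalProjection M k : H)‖ ^ 2) •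
            (Submodule.orthogonalProjection M k : H))‖ ≤ ‖f - g‖) ∧
      (∀ g ∈ PiV, (∀ h ∈ PiV, ‖f - g‖ ≤ ‖f - h‖) →
        g = f + ((d - ⟪f, k⟫) / ‖(Submodule.orthogonalProjection M k : H)‖ ^ 2) •
            (Submodule.orthogonalProjection M k : H)) :=
  projection_onto_hyperplane_in_affine_set_general H M φ₀ V hV k d hPk PiV hPiV
end

section
/- Let L be a positive integer and let σ_1 > σ_2 > 0. Define, for σ > 0, the normalized Gaussian kernel κ_{G,σ}(x,y) := (√(2π) σ)^{−L} exp(−‖x − y‖² / (2σ²)) for x, y ∈ ℝ^L. Then the kernel κ := κ_{G,σ_2} − κ_{G,σ_1} is positive semidefinite on ℝ^L: for every positive integer n, every x_1, …, x_n ∈ ℝ^L, and every c_1, …, c_n ∈ ℝ, Σ_{i=1}^n Σ_{j=1}^n c_i c_j ( (√(2π) σ_2)^{−L} exp(−‖x_i − x_j‖² / (2σ_2²)) − (√(2π) σ_1)^{−L} exp(−‖x_i − x_j‖² / (2σ_1²)) ) ≥ 0. -/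
/-!
Both normalized Gaussians are Fourier transforms of Gaussians:
`((√(2π) σ)^L)⁻¹ exp (-‖u‖²/(2σ²)) = (2π)^{-L} ∫ exp (-σ²‖v‖²/2) cos ⟪u, v⟫ dv`.
Hence the difference kernel is `∫ φ(v) cos ⟪x - y, v⟫ dv` with
`φ = (2π)^{-L} (exp (-σ₂²‖v‖²/2) - exp (-σ₁²‖v‖²/2))`, which is nonnegative because `σ₂ < σ₁`.
Any such kernel is positive semidefinite, since
`∑ᵢⱼ cᵢ cⱼ cos (aᵢ - aⱼ) = (∑ᵢ cᵢ cos aᵢ)² + (∑ᵢ cᵢ sin aᵢ)²`.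
-/

open MeasureTheory Real Finset

open scoped InnerProductSpace

theorem sum_sum_mul_cos_sub_nonneg {ι : Type*} [Fintype ι] (c a : ι → ℝ) :
    0 ≤ ∑ i, ∑ j, c i * c j * cos (a i - a j) := by
  have h : ∑ i, ∑ j, c i * c j * cos (a i - a j) =
      (∑ i, c i * cos (a i)) ^ 2 + (∑ i, c i * sin (a i)) ^ 2 := by
    simp only [sq, sum_mul_sum, ← sum_add_distrib, cos_sub]
    exact sum_congr rfl fun i _ ↦ sum_congr rfl fun j _ ↦ by ring
  rw [h]
  positivity

section Bochner

variable {V : Type*} [NormedAddCommGroup V] [InnerProductSpace ℝ V] [MeasurableSpace V]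
  [OpensMeasurableSpace V] {μ : Measure V} {φ : V → ℝ}

theorem MeasureTheory.Integrable.mul_cos_inner (hφ : Integrable φ μ) (u : V) :
    Integrable (fun v ↦ φ v * cos ⟪u, v⟫_ℝ) μ :=
  hφ.mul_bdd (c := 1) (by fun_prop) (.of_forall fun v ↦ by simpa using abs_cos_le_one _)

/-- The easy direction of Bochner's theorem. -/
theorem sum_sum_mul_integral_mul_cos_inner_nonneg (hφ : Integrable φ μ) (hφ_nonneg : 0 ≤ φ)
    {ι : Type*} [Fintype ι] (x : ι → V) (c : ι → ℝ) :
    0 ≤ ∑ i, ∑ j, c i * c j * ∫ v, φ v * cos ⟪x i - x j, v⟫_ℝ ∂μ := by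
  have hint (i j : ι) : Integrable (fun v ↦ c i * c j * (φ v * cos ⟪x i - x j, v⟫_ℝ)) μ :=
    (hφ.mul_cos_inner _).const_mul _
  have h : ∑ i, ∑ j, c i * c j * ∫ v, φ v * cos ⟪x i - x j, v⟫_ℝ ∂μ =
      ∫ v, φ v * ∑ i, ∑ j, c i * c j * cos (⟪x i, v⟫_ℝ - ⟪x j, v⟫_ℝ) ∂μ := calc
    _ = ∫ v, ∑ i, ∑ j, c i * c j * (φ v * cos ⟪x i - x j, v⟫_ℝ) ∂μ := by
      rw [integral_finsetSum _ fun i _ ↦ integrable_finsetSum _ fun j _ ↦ hint i j]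
      simp only [integral_finsetSum _ fun j _ ↦ hint _ j, integral_const_mul]
    _ = _ := by
      simp only [mul_sum, inner_sub_left]
      exact integral_congr_ae (.of_forall fun v ↦
        sum_congr rfl fun i _ ↦ sum_congr rfl fun j _ ↦ by ring)
  rw [h]
  exact integral_nonneg fun v ↦ mul_nonneg (hφ_nonneg v) (sum_sum_mul_cos_sub_nonneg c _)

end Bochner

section Gaussian

variable {V : Type*} [NormedAddCommGroup V] [InnerProductSpace ℝ V]

theorem re_cexp_neg_mul_sq_norm_add_I_mul_inner (b : ℝ) (u v : V) :
    (Complex.exp (-b * (‖v‖ : ℂ) ^ 2 + Complex.I * ⟪u, v⟫_ℝ)).re =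
      exp (-b * ‖v‖ ^ 2) * cos ⟪u, v⟫_ℝ := by
  rw [← Complex.ofReal_pow, ← Complex.ofReal_neg, ← Complex.ofReal_mul, mul_comm Complex.I,
    Complex.exp_add, ← Complex.ofReal_exp, Complex.re_ofReal_mul, Complex.exp_ofReal_mul_I_re]

variable [FiniteDimensional ℝ V] [MeasurableSpace V] [BorelSpace V] {b : ℝ}

theorem integrable_exp_neg_mul_sq_norm_mul_cos_inner (hb : 0 < b) (u : V) :
    Integrable fun v : V ↦ exp (-b * ‖v‖ ^ 2) * cos ⟪u, v⟫_ℝ := by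
  simpa only [RCLike.re_to_complex, re_cexp_neg_mul_sq_norm_add_I_mul_inner] using
    (GaussianFourier.integrable_cexp_neg_mul_sq_norm_add (b := b) (by simpa) Complex.I u).re

theorem integrable_exp_neg_mul_sq_norm (hb : 0 < b) :
    Integrable fun v : V ↦ exp (-b * ‖v‖ ^ 2) := by
  simpa using integrable_exp_neg_mul_sq_norm_mul_cos_inner hb (0 : V)

theorem integral_exp_neg_mul_sq_norm_mul_cos_inner (hb : 0 < b) (u : V) :
    ∫ v : V, exp (-b * ‖v‖ ^ 2) * cos ⟪u, v⟫_ℝ =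
      (π / b) ^ (Module.finrank ℝ V / 2 : ℝ) * exp (-‖u‖ ^ 2 / (4 * b)) := by
  have hint := GaussianFourier.integrable_cexp_neg_mul_sq_norm_add (b := b) (by simpa) Complex.I u
  have h := integral_re hint
  simp only [RCLike.re_to_complex, re_cexp_neg_mul_sq_norm_add_I_mul_inner,
    GaussianFourier.integral_cexp_neg_mul_sq_norm_add (V := V) (b := b) (by simpa)] at h
  have hexp : Complex.I ^ 2 * (‖u‖ : ℂ) ^ 2 / (4 * b) = ((-‖u‖ ^ 2 / (4 * b) : ℝ) : ℂ) := by
    rw [Complex.I_sq]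
    push_cast
    ring
  rw [h, hexp, show (π / b : ℂ) = (π / b : ℝ) by push_cast; rfl,
    show (Module.finrank ℝ V / 2 : ℂ) = (Module.finrank ℝ V / 2 : ℝ) by push_cast; rfl,
    ← Complex.ofReal_cpow (by positivity), ← Complex.ofReal_exp, ← Complex.ofReal_mul,
    Complex.ofReal_re]

theorem gaussian_eq_integral_mul_cos_inner {σ : ℝ} (hσ : 0 < σ) (u : V) :
    ((√(2 * π) * σ) ^ Module.finrank ℝ V)⁻¹ * exp (-‖u‖ ^ 2 / (2 * σ ^ 2)) =
      ∫ v : V, ((2 * π) ^ Module.finrank ℝ V)⁻¹ * exp (-(σ ^ 2 / 2) * ‖v‖ ^ 2) * cos ⟪u, v⟫_ℝ := by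
  set L := Module.finrank ℝ V
  have hsqrt : √(2 * π) ^ 2 = 2 * π := sq_sqrt (by positivity)
  set s := √(2 * π)
  have hbase : π / (σ ^ 2 / 2) = (s / σ) ^ 2 := by
    rw [div_pow, hsqrt]
    ring
  have hpow : ((s / σ) ^ 2) ^ (L / 2 : ℝ) = (s / σ) ^ L := by
    rw [← rpow_natCast _ 2, ← rpow_mul (by positivity), ← rpow_natCast]
    congr 1
    push_cast
    ring
  simp_rw [mul_assoc]
  rw [integral_const_mul, integral_exp_neg_mul_sq_norm_mul_cos_inner (by positivity), hbase, hpow,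
    show 4 * (σ ^ 2 / 2) = 2 * σ ^ 2 by ring, ← hsqrt, ← mul_assoc, ← inv_pow, ← inv_pow, ← mul_pow]
  congr 2
  field_simp

end Gaussian

theorem gaussian_difference_positive_semidefinite_general
    (L : ℕ)
    (σ₁ σ₂ : ℝ) (h₂₁ : σ₂ < σ₁) (h₂ : 0 < σ₂)
    (n : ℕ)
    (x : Fin n → EuclideanSpace ℝ (Fin L)) (c : Fin n → ℝ) :
    0 ≤ ∑ i, ∑ j, c i * c j *
      (((Real.sqrt (2 * Real.pi) * σ₂) ^ L)⁻¹ *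
          Real.exp (-‖x i - x j‖ ^ 2 / (2 * σ₂ ^ 2)) -
        ((Real.sqrt (2 * Real.pi) * σ₁) ^ L)⁻¹ *
          Real.exp (-‖x i - x j‖ ^ 2 / (2 * σ₁ ^ 2))) := by
  set g : ℝ → EuclideanSpace ℝ (Fin L) → ℝ :=
    fun σ v ↦ ((2 * π) ^ L)⁻¹ * exp (-(σ ^ 2 / 2) * ‖v‖ ^ 2)
  have hg_int {σ : ℝ} (hσ : 0 < σ) : Integrable (g σ) :=
    (integrable_exp_neg_mul_sq_norm (by positivity)).const_mul _
  have hg_repr {σ : ℝ} (hσ : 0 < σ) (u : EuclideanSpace ℝ (Fin L)) :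
      ((√(2 * π) * σ) ^ L)⁻¹ * exp (-‖u‖ ^ 2 / (2 * σ ^ 2)) = ∫ v, g σ v * cos ⟪u, v⟫_ℝ := by
    simpa only [finrank_euclideanSpace_fin] using
      gaussian_eq_integral_mul_cos_inner (V := EuclideanSpace ℝ (Fin L)) hσ u
  have h₁ : 0 < σ₁ := h₂.trans h₂₁
  have hg_mono : 0 ≤ g σ₂ - g σ₁ := fun v ↦ sub_nonneg.2 (by simp only [g]; gcongr)
  have hdiff (u : EuclideanSpace ℝ (Fin L)) :
      ((√(2 * π) * σ₂) ^ L)⁻¹ * exp (-‖u‖ ^ 2 / (2 * σ₂ ^ 2)) -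
          ((√(2 * π) * σ₁) ^ L)⁻¹ * exp (-‖u‖ ^ 2 / (2 * σ₁ ^ 2)) =
        ∫ v, (g σ₂ - g σ₁) v * cos ⟪u, v⟫_ℝ := by
    rw [hg_repr h₂, hg_repr h₁, ← integral_sub ((hg_int h₂).mul_cos_inner u)
      ((hg_int h₁).mul_cos_inner u)]
    simp only [Pi.sub_apply, sub_mul]
  simp only [hdiff]
  exact sum_sum_mul_integral_mul_cos_inner_nonneg ((hg_int h₂).sub (hg_int h₁)) hg_mono x c

/-- The difference of two normalized Gaussian kernels, the wider one minus the
narrower one (`σ₁ > σ₂ > 0`), is a positive semidefinite kernel on `ℝ^L`. -/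
theorem gaussian_difference_positive_semidefinite
    (L : ℕ) (hL : 0 < L)
    (σ₁ σ₂ : ℝ) (h₂₁ : σ₂ < σ₁) (h₂ : 0 < σ₂)
    (n : ℕ) (hn : 0 < n)
    (x : Fin n → EuclideanSpace ℝ (Fin L)) (c : Fin n → ℝ) :
    0 ≤ ∑ i, ∑ j, c i * c j *
      (((Real.sqrt (2 * Real.pi) * σ₂) ^ L)⁻¹ *
          Real.exp (-‖x i - x j‖ ^ 2 / (2 * σ₂ ^ 2)) -
        ((Real.sqrt (2 * Real.pi) * σ₁) ^ L)⁻¹ *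
          Real.exp (-‖x i - x j‖ ^ 2 / (2 * σ₁ ^ 2))) :=
  gaussian_difference_positive_semidefinite_general L σ₁ σ₂ h₂₁ h₂ n x c
end

section
/- Let U be a nonempty set and let H be a subspace of the real vector space of functions U → ℝ (with pointwise operations), equipped with an inner product ⟨·,·⟩_H making it a real Hilbert space, with reproducing kernel κ : U × U → ℝ (i.e., for every u ∈ U, κ(·,u) ∈ H and ⟨f, κ(·,u)⟩_H = f(u) for all f ∈ H). Given samples (u_j, d_j) ∈ U × ℝ, j = 1, …, r, and η > 0, define the regularized risk R(f) := (1/r) Σ_{j=1}^r (f(u_j) − d_j)² + η ‖f‖²_H for f ∈ H, and let K ∈ ℝ^{r×r} have entries K_{ij} = κ(u_i, u_j). Then the matrix K + η r I is invertible, and setting α := (K + η r I)^{−1} (d_1, …, d_r)ᵀ, the function f* := Σ_{j=1}^r α_j κ(·,u_j) is the unique minimizer of R over H: R(f*) < R(f) for every f ∈ H with f ≠ f*. -/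
/-!
The risk is `(1/r)` times the ridge loss `L(f) = ∑ j (⟪f, k_j⟫ - d_j)² + η r ‖f‖²` with
`k_j = κ(·, u_j)`, and by the reproducing property `K` is the Gram matrix of the `k_j`, so
`K + η r I` is positive definite. For `f₀ = ∑ α_j k_j` the system `(K + η r I) α = d` says exactly
that the gradient `∑ j (⟪f₀, k_j⟫ - d_j) k_j + η r f₀` of `L` vanishes at `f₀`; since `L` is a
quadratic whose quadratic part `g ↦ ∑ j ⟪g, k_j⟫² + η r ‖g‖²` is positive definite, this gives
`L(f₀ + g) = L(f₀) + (that quadratic part at g) > L(f₀)` for every `g ≠ 0`.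
-/

open scoped RealInnerProductSpace
open Matrix

namespace KernelRidge

variable {H : Type*} [NormedAddCommGroup H] [InnerProductSpace ℝ H] {ι : Type*} [Fintype ι]

def ridgeLoss (v : ι → H) (d : ι → ℝ) (c : ℝ) (f : H) : ℝ :=
  ∑ j, (⟪f, v j⟫ - d j) ^ 2 + c * ‖f‖ ^ 2

theorem ridgeLoss_add_of_gradient_eq_zero {v : ι → H} {d : ι → ℝ} {c : ℝ} {f₀ : H}
    (hgrad : ∑ j, (⟪f₀, v j⟫ - d j) • v j + c • f₀ = 0) (g : H) :
    ridgeLoss v d c (f₀ + g) = ridgeLoss v d c f₀ + ridgeLoss v 0 c g := by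
  have hcross : ∑ j, (⟪f₀, v j⟫ - d j) * ⟪v j, g⟫ + c * ⟪f₀, g⟫ = 0 := by
    simpa only [inner_add_left, sum_inner, real_inner_smul_left, inner_zero_left]
      using congrArg (⟪·, g⟫) hgrad
  have hsum : ∑ j, (⟪f₀ + g, v j⟫ - d j) ^ 2 = ∑ j, (⟪f₀, v j⟫ - d j) ^ 2
      + 2 * ∑ j, (⟪f₀, v j⟫ - d j) * ⟪v j, g⟫ + ∑ j, (⟪g, v j⟫ - 0) ^ 2 := by
    rw [Finset.mul_sum, ← Finset.sum_add_distrib, ← Finset.sum_add_distrib]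
    exact Finset.sum_congr rfl fun j _ => by rw [inner_add_left, real_inner_comm g]; ring
  simp only [ridgeLoss, Pi.zero_apply, hsum, norm_add_sq_real]
  linear_combination 2 * hcross

theorem ridgeLoss_lt_of_gradient_eq_zero {v : ι → H} {d : ι → ℝ} {c : ℝ} (hc : 0 < c)
    {f₀ : H} (hgrad : ∑ j, (⟪f₀, v j⟫ - d j) • v j + c • f₀ = 0) {f : H} (hf : f ≠ f₀) :
    ridgeLoss v d c f₀ < ridgeLoss v d c f := by
  have hpos : 0 < ridgeLoss v 0 c (f - f₀) := by
    have hg : 0 < ‖f - f₀‖ := norm_pos_iff.mpr (sub_ne_zero.mpr hf)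
    unfold ridgeLoss
    positivity
  have hsplit := ridgeLoss_add_of_gradient_eq_zero hgrad (f - f₀)
  rw [add_sub_cancel] at hsplit
  linarith

theorem inner_sum_smul_eq_gram_mulVec (v : ι → H) (α : ι → ℝ) (j : ι) :
    ⟪∑ i, α i • v i, v j⟫ = (gram ℝ v *ᵥ α) j := by
  simp only [sum_inner, real_inner_smul_left, mulVec, dotProduct, gram_apply]
  exact Finset.sum_congr rfl fun i _ => by rw [real_inner_comm, mul_comm]

theorem gradient_eq_zero_of_mulVec_eq [DecidableEq ι] {v : ι → H} {d : ι → ℝ} {c : ℝ}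
    {α : ι → ℝ} (hα : (gram ℝ v + c • 1) *ᵥ α = d) :
    ∑ j, (⟪∑ i, α i • v i, v j⟫ - d j) • v j + c • ∑ i, α i • v i = 0 := by
  have hres : ∀ j, ⟪∑ i, α i • v i, v j⟫ - d j = -(c * α j) := fun j => by
    rw [inner_sum_smul_eq_gram_mulVec, ← hα]
    simp [add_mulVec, smul_mulVec]
  simp [hres, Finset.smul_sum, smul_smul]

theorem posDef_gram_add_smul_one [DecidableEq ι] (v : ι → H) {c : ℝ} (hc : 0 < c) :
    (gram ℝ v + c • (1 : Matrix ι ι ℝ)).PosDef :=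
  PosDef.posSemidef_add (posSemidef_gram ℝ v) (PosDef.one.smul hc)

end KernelRidge

open KernelRidge

theorem kernel_ridge_regression_general
    (U : Type*)
    (H : Type*) [NormedAddCommGroup H] [InnerProductSpace ℝ H]
    (J : H →ₗ[ℝ] (U → ℝ))
    (κ : U → U → ℝ) (k : U → H)
    (hk : ∀ u : U, J (k u) = fun v => κ v u)
    (hrep : ∀ (f : H) (u : U), ⟪f, k u⟫ = J f u)
    (r : ℕ) (hr : 0 < r) (u : Fin r → U) (d : Fin r → ℝ)
    (η : ℝ) (hη : 0 < η)
    (R : H → ℝ)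
    (hR : R = fun f => (1 / (r : ℝ)) * ∑ j, (J f (u j) - d j) ^ 2 + η * ‖f‖ ^ 2)
    (K : Matrix (Fin r) (Fin r) ℝ) (hK : K = fun i j => κ (u i) (u j)) :
    IsUnit (K + (η * (r : ℝ)) • (1 : Matrix (Fin r) (Fin r) ℝ)) ∧
    ∀ α : Fin r → ℝ, α = (K + (η * (r : ℝ)) • (1 : Matrix (Fin r) (Fin r) ℝ))⁻¹.mulVec d →
      ∀ f : H, f ≠ ∑ j, α j • k (u j) → R (∑ j, α j • k (u j)) < R f := by
  have hr' : (0 : ℝ) < r := Nat.cast_pos.mpr hr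
  have hc : 0 < η * r := mul_pos hη hr'
  have hK_gram : K = gram ℝ (fun j => k (u j)) := by
    ext i j
    rw [hK, gram_apply, real_inner_comm, hrep, hk]
  have hR_loss : ∀ f, R f = (1 / (r : ℝ)) * ridgeLoss (fun j => k (u j)) d (η * r) f := by
    intro f
    simp only [hR, ridgeLoss, hrep]
    field_simp
  have hunit : IsUnit (K + (η * (r : ℝ)) • (1 : Matrix (Fin r) (Fin r) ℝ)) :=
    hK_gram ▸ (posDef_gram_add_smul_one _ hc).isUnit
  refine ⟨hunit, fun α hα f hf => ?_⟩
  have hsolve : (gram ℝ (fun j => k (u j)) + (η * (r : ℝ)) • 1) *ᵥ α = d := by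
    rw [← hK_gram, hα, mulVec_mulVec, mul_nonsing_inv _ ((isUnit_iff_isUnit_det _).mp hunit),
      one_mulVec]
  rw [hR_loss, hR_loss]
  exact mul_lt_mul_of_pos_left
    (ridgeLoss_lt_of_gradient_eq_zero hc (gradient_eq_zero_of_mulVec_eq hsolve) hf)
    (one_div_pos.mpr hr')

/-- Kernel ridge regression in a RKHS: the matrix `K + η r I` is invertible, and the
function `f* = ∑ j, α j • κ(·, u j)` with `α = (K + η r I)⁻¹ d` is the unique minimizer
of the regularized empirical risk `R(f) = (1/r) ∑ j (f(u j) - d j)² + η ‖f‖²`. -/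
theorem kernel_ridge_regression
    (U : Type*) [Nonempty U]
    (H : Type*) [NormedAddCommGroup H] [InnerProductSpace ℝ H] [CompleteSpace H]
    (J : H →ₗ[ℝ] (U → ℝ)) (hJ : Function.Injective J)
    (κ : U → U → ℝ) (k : U → H)
    (hk : ∀ u : U, J (k u) = fun v => κ v u)
    (hrep : ∀ (f : H) (u : U), ⟪f, k u⟫ = J f u)
    (r : ℕ) (hr : 0 < r) (u : Fin r → U) (d : Fin r → ℝ)
    (η : ℝ) (hη : 0 < η)
    (R : H → ℝ)
    (hR : R = fun f => (1 / (r : ℝ)) * ∑ j, (J f (u j) - d j) ^ 2 + η * ‖f‖ ^ 2)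
    (K : Matrix (Fin r) (Fin r) ℝ) (hK : K = fun i j => κ (u i) (u j)) :
    IsUnit (K + (η * (r : ℝ)) • (1 : Matrix (Fin r) (Fin r) ℝ)) ∧
    ∀ α : Fin r → ℝ, α = (K + (η * (r : ℝ)) • (1 : Matrix (Fin r) (Fin r) ℝ))⁻¹.mulVec d →
      ∀ f : H, f ≠ ∑ j, α j • k (u j) → R (∑ j, α j • k (u j)) < R f :=
  kernel_ridge_regression_general U H J κ k hk hrep r hr u d η hη R hR K hK
end
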